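/- There exists a constant C > 0 such that for every irrational x ∈ (0,1), |W(x) - Σ_{j=0}^∞ (-1)^j (log q_{j+1}(x))/q_j(x)| < C whenever both series converge (and each converges iff the other does). -/

import Mathlib

/-!
Write `t = Gⁿ(x)`. Then `βₙ₋₁(x) = 1 / (qₙ + qₙ₋₁ t)` and `qₙ₊₁ = ⌊1/t⌋ qₙ + qₙ₋₁`, so `βₙ₋₁(x)`
differs from `1/qₙ` by at most `2/qₙ₊₁`, and `log (1/t)` differs from `log qₙ₊₁` by at most
`log 2 + log qₙ`. Hence the `n`-th terms of the two series differ by `O((1 + log qₙ)/qₙ)`, which is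
`O(1/√qₙ)`. Since `qₙ ≥ 2^⌊n/2⌋`, these differences are dominated by a summable sequence that does
not depend on `x`: the two sequences of partial sums converge together, and their limits differ by
at most its sum.
-/

open Finset Filter

noncomputable def gaussMap (x : ℝ) : ℝ := Int.fract (1 / x)

/-- `betaP x n` is β_{n-1}(x) = ∏_{i=0}^{n-1} Gⁱ(x), with `betaP x 0 = 1`. -/
noncomputable def betaP (x : ℝ) (n : ℕ) : ℝ := ∏ i ∈ Finset.range n, gaussMap^[i] x

/-- the (n+1)-st partial quotient a_{n+1} = ⌊1/Gⁿ(x)⌋ of the regular continued fraction. -/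
noncomputable def cfDigit (x : ℝ) (n : ℕ) : ℤ := ⌊1 / gaussMap^[n] x⌋

/-- `convAux x n = ((pₙ, qₙ), (pₙ₋₁, qₙ₋₁))`, the convergents of the regular continued
fraction of `x`, with `p₋₁ = 1, q₋₁ = 0, p₀ = 0, q₀ = 1`. -/
noncomputable def convAux (x : ℝ) : ℕ → (ℤ × ℤ) × (ℤ × ℤ)
  | 0 => ((0, 1), (1, 0))
  | n + 1 =>
      ((cfDigit x n * (convAux x n).1.1 + (convAux x n).2.1,
        cfDigit x n * (convAux x n).1.2 + (convAux x n).2.2),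
       (convAux x n).1)

/-- numerator pₙ of the n-th principal convergent of `x`. -/
noncomputable def pConv (x : ℝ) (n : ℕ) : ℤ := (convAux x n).1.1

/-- denominator qₙ of the n-th principal convergent of `x`. -/
noncomputable def qConv (x : ℝ) (n : ℕ) : ℤ := (convAux x n).1.2

open Real

section PartialSums

variable {E : Type*} [AddCommGroup E] [TopologicalSpace E] [IsTopologicalAddGroup E] {f g : ℕ → E}

lemma Summable.exists_tendsto_sum_range_iff (h : Summable fun n => f n - g n) :
    (∃ L, Tendsto (fun N => ∑ n ∈ range N, f n) atTop (nhds L)) ↔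
      ∃ L, Tendsto (fun N => ∑ n ∈ range N, g n) atTop (nhds L) := by
  have hdiff := h.hasSum.tendsto_sum_nat
  simp only [sum_sub_distrib] at hdiff
  constructor
  · rintro ⟨L, hL⟩
    exact ⟨L - ∑' n, (f n - g n), by simpa using hL.sub hdiff⟩
  · rintro ⟨L, hL⟩
    exact ⟨L + ∑' n, (f n - g n), by simpa using hL.add hdiff⟩

lemma Summable.sub_eq_tsum_of_tendsto [T2Space E] (h : Summable fun n => f n - g n) {L L' : E}
    (hf : Tendsto (fun N => ∑ n ∈ range N, f n) atTop (nhds L))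
    (hg : Tendsto (fun N => ∑ n ∈ range N, g n) atTop (nhds L')) :
    L - L' = ∑' n, (f n - g n) :=
  tendsto_nhds_unique (by simpa only [sum_sub_distrib] using hf.sub hg) h.hasSum.tendsto_sum_nat

end PartialSums

lemma log_two_add_log_div_le {m : ℝ} (hm : 1 ≤ m) : (log 2 + log m) / m ≤ 3 / √m := by
  have hs : 1 ≤ √m := one_le_sqrt.2 hm
  have hlog2 : log 2 ≤ 1 := by linarith [log_le_sub_one_of_pos (two_pos : (0 : ℝ) < 2)]
  have hlogm : log m ≤ 2 * √m := by
    linarith [log_sqrt (zero_le_one.trans hm), log_le_sub_one_of_pos (one_pos.trans_le hs)]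
  rw [div_le_div_iff₀ (by linarith) (by linarith)]
  nlinarith [mul_self_sqrt (zero_le_one.trans hm)]

lemma abs_inv_sub_inv_le {a t Q K : ℝ} (ha : 1 ≤ a) (ht : 0 < t) (hat : a * t ≤ 1) (hQ : 1 ≤ Q)
    (hK0 : 0 ≤ K) (hKQ : K ≤ Q) : |(Q + K * t)⁻¹ - Q⁻¹| ≤ 2 / (a * Q + K) := by
  have hQ0 : 0 < Q := by linarith
  have hKt : 0 ≤ K * t := mul_nonneg hK0 ht.le
  have hdiff : Q⁻¹ - (Q + K * t)⁻¹ = K * t / (Q * (Q + K * t)) := by field_simp; ring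
  have hsmall : K * t / (Q * (Q + K * t)) ≤ 2 / (a * Q + K) := by
    rw [div_le_div_iff₀ (by positivity) (by nlinarith)]
    have hleft : K * t * (a * Q) ≤ Q * Q := by nlinarith [mul_le_mul_of_nonneg_left hat hK0]
    have hright : K * t * K ≤ Q * (K * t) := by nlinarith
    nlinarith
  rw [abs_sub_comm, abs_of_nonneg (hdiff ▸ by positivity)]
  exact hdiff ▸ hsmall

lemma abs_log_sub_log_le {a s Q K : ℝ} (ha : 1 ≤ a) (has : a ≤ s) (hsa : s < a + 1) (hQ : 1 ≤ Q)
    (hK0 : 0 ≤ K) (hKQ : K ≤ Q) : |log s - log (a * Q + K)| ≤ log 2 + log Q := by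
  have hlog_mul (u v : ℝ) (hu : 1 ≤ u) (hv : 1 ≤ v) : log (u * v) = log u + log v :=
    log_mul (by linarith) (by linarith)
  have hlower : log a + log Q ≤ log (a * Q + K) := by
    rw [← hlog_mul a Q ha hQ]
    exact log_le_log (by nlinarith) (by linarith)
  have hupper : log (a * Q + K) ≤ log 2 + log a + log Q := by
    rw [← hlog_mul 2 a one_le_two ha, ← hlog_mul _ Q (by linarith) hQ]
    exact log_le_log (by nlinarith) (by nlinarith)
  have hs_lower : log a ≤ log s := log_le_log (by linarith) has
  have hs_upper : log s ≤ log 2 + log a := by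
    rw [← hlog_mul 2 a one_le_two ha]
    exact log_le_log (by linarith) (by linarith)
  have hlogQ : 0 ≤ log Q := log_nonneg hQ
  rw [abs_le]
  constructor <;> linarith

lemma abs_inv_mul_log_sub_log_div_le {t Q K : ℝ} (ht : 1 ≤ ⌊1 / t⌋) (hQ : 1 ≤ Q) (hK0 : 0 ≤ K)
    (hKQ : K ≤ Q) : |(Q + K * t)⁻¹ * log (1 / t) - log (⌊1 / t⌋ * Q + K) / Q| ≤ 9 / √Q := by
  have ha : (1 : ℝ) ≤ ⌊1 / t⌋ := by exact_mod_cast ht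
  set a : ℝ := (⌊1 / t⌋ : ℝ)
  have has : a ≤ 1 / t := Int.floor_le _
  have hsa : 1 / t < a + 1 := Int.lt_floor_add_one _
  have ht0 : 0 < t := one_div_pos.1 (by linarith)
  have hat : a * t ≤ 1 := by rwa [le_div_iff₀ ht0] at has
  have hQ' : Q ≤ a * Q + K := by nlinarith
  have hlog_s : log (1 / t) ≤ log 2 + log (a * Q + K) := by
    rw [← log_mul two_ne_zero (by linarith)]
    exact log_le_log (by linarith) (by nlinarith)
  have hsqrt : 3 / √(a * Q + K) ≤ 3 / √Q :=
    div_le_div_of_nonneg_left zero_le_three (sqrt_pos.2 (by linarith)) (sqrt_le_sqrt hQ')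
  have hlog_nonneg : 0 ≤ log (1 / t) := log_nonneg (by linarith)
  calc |(Q + K * t)⁻¹ * log (1 / t) - log (a * Q + K) / Q|
      = |((Q + K * t)⁻¹ - Q⁻¹) * log (1 / t) + (log (1 / t) - log (a * Q + K)) / Q| := by
        congr 1; field_simp; ring
    _ ≤ 2 / (a * Q + K) * (log 2 + log (a * Q + K)) + (log 2 + log Q) / Q := by
        grw [abs_add_le, abs_mul, abs_div, abs_of_pos (by linarith : 0 < Q),
          abs_of_nonneg hlog_nonneg,
          abs_inv_sub_inv_le ha ht0 hat hQ hK0 hKQ, abs_log_sub_log_le ha has hsa hQ hK0 hKQ,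
          hlog_s]
    _ = 2 * ((log 2 + log (a * Q + K)) / (a * Q + K)) + (log 2 + log Q) / Q := by ring
    _ ≤ 9 / √Q := by
        grw [log_two_add_log_div_le (hQ.trans hQ'), hsqrt, log_two_add_log_div_le hQ]
        exact le_of_eq (by ring)

def irrationalUnitInterval : Set ℝ := {x | Irrational x ∧ x ∈ Set.Ioo 0 1}

lemma mapsTo_gaussMap : Set.MapsTo gaussMap irrationalUnitInterval irrationalUnitInterval := by
  rintro y ⟨hy, hy0, -⟩
  have hinv : Irrational (1 / y) := by simpa only [one_div] using hy.inv
  refine ⟨hinv.sub_intCast ⌊1 / y⌋, Int.fract_pos.2 fun h => hinv.ne_int _ h, Int.fract_lt_one _⟩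

lemma gaussMap_iterate_mem {x : ℝ} (hx : x ∈ irrationalUnitInterval) (n : ℕ) :
    gaussMap^[n] x ∈ irrationalUnitInterval :=
  mapsTo_gaussMap.iterate n hx

lemma cfDigit_add_gaussMap_iterate_succ (x : ℝ) (n : ℕ) :
    (cfDigit x n : ℝ) + gaussMap^[n + 1] x = 1 / gaussMap^[n] x := by
  rw [Function.iterate_succ_apply', gaussMap, cfDigit, Int.floor_add_fract]

lemma one_le_cfDigit {x : ℝ} (hx : x ∈ irrationalUnitInterval) (n : ℕ) : 1 ≤ cfDigit x n := by
  obtain ⟨-, ht0, ht1⟩ := gaussMap_iterate_mem hx n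
  exact Int.le_floor.2 (by exact_mod_cast one_le_one_div ht0 ht1.le)

/-- `qPrev x n` is q_{n-1}, with q_{-1} = 0. -/
noncomputable def qPrev (x : ℝ) (n : ℕ) : ℤ := (convAux x n).2.2

lemma qPrev_zero (x : ℝ) : qPrev x 0 = 0 := rfl

lemma qPrev_succ (x : ℝ) (n : ℕ) : qPrev x (n + 1) = qConv x n := rfl

lemma qConv_zero (x : ℝ) : qConv x 0 = 1 := rfl

lemma qConv_succ (x : ℝ) (n : ℕ) : qConv x (n + 1) = cfDigit x n * qConv x n + qPrev x n := rfl

lemma one_le_qConv {x : ℝ} (hx : x ∈ irrationalUnitInterval) (n : ℕ) : 1 ≤ qConv x n := by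
  induction n using Nat.twoStepInduction with
  | zero => exact le_rfl
  | one => simpa [qConv_succ, qConv_zero, qPrev_zero] using one_le_cfDigit hx 0
  | more n hn hn' =>
    rw [qConv_succ, qPrev_succ]
    nlinarith [one_le_cfDigit hx (n + 1)]

lemma qPrev_nonneg {x : ℝ} (hx : x ∈ irrationalUnitInterval) : ∀ n, 0 ≤ qPrev x n
  | 0 => le_rfl
  | n + 1 => zero_le_one.trans (one_le_qConv hx n)

lemma qConv_le_qConv_succ {x : ℝ} (hx : x ∈ irrationalUnitInterval) (n : ℕ) :
    qConv x n ≤ qConv x (n + 1) := by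
  rw [qConv_succ]
  nlinarith [one_le_cfDigit hx n, one_le_qConv hx n, qPrev_nonneg hx n]

lemma qPrev_le_qConv {x : ℝ} (hx : x ∈ irrationalUnitInterval) : ∀ n, qPrev x n ≤ qConv x n
  | 0 => zero_le_one
  | n + 1 => qConv_le_qConv_succ hx n

lemma two_mul_qConv_le {x : ℝ} (hx : x ∈ irrationalUnitInterval) (n : ℕ) :
    2 * qConv x n ≤ qConv x (n + 2) := by
  rw [qConv_succ, qPrev_succ]
  nlinarith [one_le_cfDigit hx (n + 1), qConv_le_qConv_succ hx n, one_le_qConv hx (n + 1)]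

lemma two_pow_half_le_qConv {x : ℝ} (hx : x ∈ irrationalUnitInterval) (n : ℕ) :
    2 ^ (n / 2) ≤ qConv x n := by
  induction n using Nat.twoStepInduction with
  | zero => exact le_rfl
  | one => exact one_le_qConv hx 1
  | more n hn _ =>
    rw [Nat.add_div_right n two_pos, pow_succ]
    linarith [two_mul_qConv_le hx n]

lemma betaP_succ (x : ℝ) (n : ℕ) : betaP x (n + 1) = betaP x n * gaussMap^[n] x :=
  prod_range_succ _ n

lemma betaP_mul_eq_one {x : ℝ} (hx : x ∈ irrationalUnitInterval) (n : ℕ) :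
    betaP x n * (qConv x n + qPrev x n * gaussMap^[n] x) = 1 := by
  induction n with
  | zero => simp [betaP, qConv_zero, qPrev_zero]
  | succ n ih =>
    have ht : gaussMap^[n] x ≠ 0 := (gaussMap_iterate_mem hx n).2.1.ne'
    have hdigit := cfDigit_add_gaussMap_iterate_succ x n
    rw [betaP_succ, qConv_succ, qPrev_succ, ← ih]
    field_simp at hdigit
    push_cast
    linear_combination betaP x n * qConv x n * hdigit

lemma abs_betaP_mul_log_sub_log_div_le {x : ℝ} (hx : x ∈ irrationalUnitInterval) (n : ℕ) :
    |betaP x n * log (1 / gaussMap^[n] x) - log (qConv x (n + 1)) / qConv x n| ≤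
      9 / √(qConv x n) := by
  have hbeta : betaP x n = (qConv x n + qPrev x n * gaussMap^[n] x)⁻¹ :=
    eq_inv_of_mul_eq_one_left (betaP_mul_eq_one hx n)
  have hq : (qConv x (n + 1) : ℝ) = ⌊1 / gaussMap^[n] x⌋ * qConv x n + qPrev x n := by
    rw [qConv_succ, cfDigit]; push_cast; rfl
  rw [hbeta, hq]
  exact abs_inv_mul_log_sub_log_div_le (one_le_cfDigit hx n) (by exact_mod_cast one_le_qConv hx n)
    (by exact_mod_cast qPrev_nonneg hx n) (by exact_mod_cast qPrev_le_qConv hx n)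

lemma inv_sqrt_qConv_le {x : ℝ} (hx : x ∈ irrationalUnitInterval) (n : ℕ) :
    (√(qConv x n))⁻¹ ≤ (√2)⁻¹ ^ (n / 2) := by
  rw [inv_pow]
  refine inv_anti₀ (by positivity) (le_sqrt_of_sq_le ?_)
  rw [← pow_mul, mul_comm, pow_mul, sq_sqrt zero_le_two]
  exact_mod_cast two_pow_half_le_qConv hx n

lemma summable_pow_div_two {r : ℝ} (h0 : 0 ≤ r) (h1 : r < 1) :
    Summable fun n : ℕ => r ^ (n / 2) := by
  have hgeom := summable_geometric_of_lt_one h0 h1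
  apply Summable.even_add_odd <;> simpa [Nat.mul_add_div two_pos] using hgeom

theorem wilton_comparison :
    ∃ C : ℝ, 0 < C ∧ ∀ x : ℝ, Irrational x → 0 < x → x < 1 →
      ((∃ L : ℝ, Tendsto (fun N => ∑ n ∈ Finset.range N,
            (-1 : ℝ) ^ n * betaP x n * Real.log (1 / gaussMap^[n] x)) atTop (nhds L)) ↔
        (∃ L' : ℝ, Tendsto (fun N => ∑ n ∈ Finset.range N,
            (-1 : ℝ) ^ n * (Real.log (qConv x (n + 1) : ℝ) / (qConv x n : ℝ)))
            atTop (nhds L'))) ∧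
      (∀ L L' : ℝ,
        Tendsto (fun N => ∑ n ∈ Finset.range N,
            (-1 : ℝ) ^ n * betaP x n * Real.log (1 / gaussMap^[n] x)) atTop (nhds L) →
        Tendsto (fun N => ∑ n ∈ Finset.range N,
            (-1 : ℝ) ^ n * (Real.log (qConv x (n + 1) : ℝ) / (qConv x n : ℝ)))
            atTop (nhds L') →
        |L - L'| < C) := by
  set r : ℝ := (√2)⁻¹
  have hr0 : 0 ≤ r := by positivity
  have hr1 : r < 1 := inv_lt_one_of_one_lt₀ (by simp [lt_sqrt])
  have hbound : Summable fun n : ℕ => 9 * r ^ (n / 2) := (summable_pow_div_two hr0 hr1).mul_left 9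
  refine ⟨∑' n : ℕ, 9 * r ^ (n / 2) + 1,
    add_pos_of_nonneg_of_pos (tsum_nonneg fun n => by positivity) one_pos, fun x hirr h0 h1 => ?_⟩
  have hx : x ∈ irrationalUnitInterval := ⟨hirr, h0, h1⟩
  have hterm (n : ℕ) : ‖(-1 : ℝ) ^ n * betaP x n * Real.log (1 / gaussMap^[n] x) -
      (-1 : ℝ) ^ n * (Real.log (qConv x (n + 1) : ℝ) / (qConv x n : ℝ))‖ ≤ 9 * r ^ (n / 2) := by
    rw [norm_eq_abs, mul_assoc, ← mul_sub, abs_mul, abs_neg_one_pow, one_mul]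
    calc _ ≤ 9 / √(qConv x n) := abs_betaP_mul_log_sub_log_div_le hx n
      _ ≤ 9 * r ^ (n / 2) := by grw [div_eq_mul_inv, inv_sqrt_qConv_le hx n]
  have hsum := hbound.of_norm_bounded hterm
  refine ⟨hsum.exists_tendsto_sum_range_iff, fun L L' hL hL' => ?_⟩
  rw [hsum.sub_eq_tsum_of_tendsto hL hL', ← norm_eq_abs]
  exact (tsum_of_norm_bounded hbound.hasSum hterm).trans_lt (lt_add_one _)
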